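/- arXiv:1512.00175 — 2 statements merged into one kernel-verified Lean document; each statement's English description precedes it below -/
import Mathlib

section
/- Let I be a countable set and, for each i ∈ I, let (f_m^i)_{m ∈ ℕ} be a family of real-valued functions on an interval (a,b) that is uniformly bounded (equibounded) and satisfies the semi-decreasing property: for all δ > 0 there exist τ > 0 and m_i ∈ ℕ such that whenever s_1, s_2 ∈ (a,b) with s_2 - τ ≤ s_1 ≤ s_2, then for all m ≥ m_i one has f_m^i(s_2) ≤ f_m^i(s_1) + δ. Then there exists a subsequence σ(m) and functions f^i : (a,b) → ℝ such that for every s ∈ (a,b) and every i ∈ I, f_{σ(m)}^i(s) → f^i(s). -/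
/-!
Pass first to a subsequence converging at every rational point (a diagonal argument, here
compactness of a countable product of intervals). For `δ > 0` the semi-decreasing property
chains into `f (s₂) - c s₂ ≤ f (s₁) - c s₁ + δ` for all `s₁ ≤ s₂`, with `c = δ / τ`; the rational
limits inherit this and are therefore within `δ` of an antitone function `W`. At every common
continuity point of these `W`, squeezing `f (s)` between nearby rational values shows that the
subsequence is Cauchy. The remaining points are countably many, and a second extraction handles
them.
-/

open Filter Topology Set

def SemiDecreasingOn (u : ℕ → ℝ → ℝ) (S : Set ℝ) : Prop :=
  ∀ δ > (0 : ℝ), ∃ τ > (0 : ℝ), ∃ N : ℕ, ∀ s₁ ∈ S, ∀ s₂ ∈ S,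
    s₂ - τ ≤ s₁ → s₁ ≤ s₂ → ∀ m ≥ N, u m s₂ ≤ u m s₁ + δ

def AlmostAntitoneOn (g : ℝ → ℝ) (S : Set ℝ) (δ : ℝ) : Prop :=
  ∀ x ∈ S, ∀ y ∈ S, x ≤ y → g y ≤ g x + δ

theorem AlmostAntitoneOn.mono {g : ℝ → ℝ} {S T : Set ℝ} {δ : ℝ}
    (hg : AlmostAntitoneOn g T δ) (hST : S ⊆ T) : AlmostAntitoneOn g S δ :=
  fun x hx y hy => hg x (hST hx) y (hST hy)

theorem SemiDecreasingOn.comp_strictMono {u : ℕ → ℝ → ℝ} {S : Set ℝ}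
    (hu : SemiDecreasingOn u S) {σ : ℕ → ℕ} (hσ : StrictMono σ) :
    SemiDecreasingOn (fun m => u (σ m)) S := by
  intro δ hδ
  obtain ⟨τ, hτ, N, hN⟩ := hu δ hδ
  exact ⟨τ, hτ, N, fun s₁ h₁ s₂ h₂ hτ₁ h₁₂ m hm => hN s₁ h₁ s₂ h₂ hτ₁ h₁₂ (σ m)
    (hm.trans hσ.le_apply)⟩

theorem almostAntitoneOn_sub_mul_of_local {S : Set ℝ} (hS : S.OrdConnected) {g : ℝ → ℝ}
    {δ τ : ℝ} (hδ : 0 ≤ δ) (hτ : 0 < τ)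
    (h : ∀ x ∈ S, ∀ y ∈ S, y - τ ≤ x → x ≤ y → g y ≤ g x + δ) :
    AlmostAntitoneOn (fun x => g x - δ / τ * x) S δ := by
  have chain : ∀ n : ℕ, ∀ x ∈ S, ∀ y ∈ S, x ≤ y → y - x ≤ n * τ → g y ≤ g x + n * δ := by
    intro n
    induction n with
    | zero =>
      intro x _ y _ hxy hyx
      obtain rfl : y = x := by push_cast at hyx; linarith
      simp
    | succ n ih =>
      intro x hx y hy hxy hyx
      have hnδ : 0 ≤ (n : ℝ) * δ := by positivity
      push_cast at hyx ⊢
      by_cases hnear : y - τ ≤ x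
      · linarith [h x hx y hy hnear hxy]
      · have hfar : x < y - τ := not_le.1 hnear
        have hr : y - τ ∈ S := hS.out hx hy ⟨hfar.le, by linarith⟩
        linarith [h (y - τ) hr y hy le_rfl (by linarith), ih x hx (y - τ) hr hfar.le (by linarith)]
  intro x hx y hy hxy
  have hquot : 0 ≤ (y - x) / τ := div_nonneg (by linarith) hτ.le
  have hsteps : (y - x) / τ ≤ ⌈(y - x) / τ⌉₊ := Nat.le_ceil _
  have hchain := chain ⌈(y - x) / τ⌉₊ x hx y hy hxy (by rwa [div_le_iff₀ hτ] at hsteps)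
  have hcount : (⌈(y - x) / τ⌉₊ : ℝ) * δ ≤ ((y - x) / τ + 1) * δ :=
    mul_le_mul_of_nonneg_right (Nat.ceil_lt_add_one hquot).le hδ
  have hlin : ((y - x) / τ + 1) * δ = δ / τ * y - δ / τ * x + δ := by ring
  linarith

theorem AlmostAntitoneOn.of_tendsto {ψ : ℕ → ℝ → ℝ} {φ : ℝ → ℝ} {S : Set ℝ} {δ : ℝ}
    (hψ : ∀ᶠ m in atTop, AlmostAntitoneOn (ψ m) S δ)
    (hlim : ∀ q ∈ S, Tendsto (ψ · q) atTop (𝓝 (φ q))) :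
    AlmostAntitoneOn φ S δ := fun x hx y hy hxy =>
  le_of_tendsto_of_tendsto (hlim y hy) ((hlim x hx).add_const δ)
    (hψ.mono fun _ hm => hm x hx y hy hxy)

/-- The envelope `x ↦ sup {φ t | t ∈ D, x ≤ t}`, with `-C` added so that the supremum is
never taken over the empty set. -/
theorem AlmostAntitoneOn.exists_antitone {φ : ℝ → ℝ} {D : Set ℝ} {δ C : ℝ}
    (hφ : AlmostAntitoneOn φ D δ) (hC : ∀ q ∈ D, |φ q| ≤ C) :
    ∃ W : ℝ → ℝ, Antitone W ∧ ∀ q ∈ D, φ q ≤ W q ∧ W q ≤ φ q + δ := by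
  set E : ℝ → Set ℝ := fun x => insert (-C) (φ '' (D ∩ Ici x))
  have hbdd : ∀ x, BddAbove (E x) := fun x =>
    bddAbove_insert.2 ⟨C, by rintro _ ⟨q, hq, rfl⟩; exact (le_abs_self _).trans (hC q hq.1)⟩
  refine ⟨fun x => sSup (E x), fun x y hxy => ?_, fun q hq => ⟨?_, ?_⟩⟩
  · exact csSup_le_csSup (hbdd x) (insert_nonempty _ _)
      (insert_subset_insert (image_mono (inter_subset_inter_right _ (Ici_subset_Ici.2 hxy))))
  · exact le_csSup (hbdd q) (mem_insert_of_mem _ ⟨q, ⟨hq, mem_Ici.2 le_rfl⟩, rfl⟩)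
  · refine csSup_le (insert_nonempty _ _) ?_
    rintro _ (rfl | ⟨t, ⟨ht, hqt⟩, rfl⟩)
    · linarith [neg_abs_le (φ q), hC q hq, hφ q hq q hq le_rfl]
    · exact hφ q hq t ht hqt

theorem Dense.exists_mem_lt_and_gt {D U : Set ℝ} (hD : Dense D) {s : ℝ} (hU : U ∈ 𝓝 s) :
    ∃ q₁ ∈ D ∩ U, ∃ q₂ ∈ D ∩ U, q₁ < s ∧ s < q₂ := by
  obtain ⟨l, r, ⟨hl, hr⟩, hlr⟩ := mem_nhds_iff_exists_Ioo_subset.1 hU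
  obtain ⟨q₁, hq₁D, hlq₁, hq₁s⟩ := hD.exists_between hl
  obtain ⟨q₂, hq₂D, hsq₂, hq₂r⟩ := hD.exists_between hr
  exact ⟨q₁, ⟨hq₁D, hlr ⟨hlq₁, hq₁s.trans hr⟩⟩, q₂, ⟨hq₂D, hlr ⟨hl.trans hsq₂, hq₂r⟩⟩,
    hq₁s, hsq₂⟩

theorem exists_eventually_mem_Icc_of_continuousAt {ψ : ℕ → ℝ → ℝ} {φ W : ℝ → ℝ}
    {S D : Set ℝ} {δ s : ℝ} (hδ : 0 < δ) (hψ : ∀ᶠ m in atTop, AlmostAntitoneOn (ψ m) S δ)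
    (hD : Dense D) (hlim : ∀ q ∈ S ∩ D, Tendsto (ψ · q) atTop (𝓝 (φ q)))
    (hW : ∀ q ∈ S ∩ D, φ q ≤ W q ∧ W q ≤ φ q + δ) (hS : S ∈ 𝓝 s) (hWs : ContinuousAt W s) :
    ∃ lo hi, hi - lo ≤ 7 * δ ∧ ∀ᶠ m in atTop, ψ m s ∈ Icc lo hi := by
  have hU : S ∩ W ⁻¹' Ioo (W s - δ) (W s + δ) ∈ 𝓝 s :=
    inter_mem hS (hWs (Ioo_mem_nhds (by linarith) (by linarith)))
  obtain ⟨q₁, ⟨hq₁D, hq₁S, hWq₁⟩, q₂, ⟨hq₂D, hq₂S, hWq₂⟩, hq₁s, hsq₂⟩ :=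
    hD.exists_mem_lt_and_gt hU
  have hsS : s ∈ S := mem_of_mem_nhds hS
  have hW₁ := hW q₁ ⟨hq₁S, hq₁D⟩
  have hW₂ := hW q₂ ⟨hq₂S, hq₂D⟩
  refine ⟨φ q₂ - 2 * δ, φ q₁ + 2 * δ, by linarith [hWq₁.2, hWq₂.1], ?_⟩
  filter_upwards [hψ, (hlim q₁ ⟨hq₁S, hq₁D⟩).eventually (gt_mem_nhds (lt_add_of_pos_right _ hδ)),
    (hlim q₂ ⟨hq₂S, hq₂D⟩).eventually (lt_mem_nhds (sub_lt_self _ hδ))] with m hm h₁ h₂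
  exact ⟨by linarith [hm s hsS q₂ hq₂S hsq₂.le], by linarith [hm q₁ hq₁S s hsS hq₁s.le]⟩

theorem cauchySeq_of_forall_eventually_mem_Icc {x : ℕ → ℝ}
    (h : ∀ ε > 0, ∃ lo hi, hi - lo < ε ∧ ∀ᶠ m in atTop, x m ∈ Icc lo hi) : CauchySeq x := by
  rw [Metric.cauchySeq_iff']
  intro ε hε
  obtain ⟨lo, hi, hlen, hev⟩ := h ε hε
  obtain ⟨N, hN⟩ := eventually_atTop.1 hev
  refine ⟨N, fun n hn => ?_⟩
  have hn' := hN n hn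
  have hN' := hN N le_rfl
  rw [Real.dist_eq, abs_lt]
  constructor <;> linarith [hn'.1, hn'.2, hN'.1, hN'.2]

section Bracket

variable {u : ℕ → ℝ → ℝ} {a b B : ℝ} {D : Set ℝ}

theorem SemiDecreasingOn.exists_antitone_bracket (hu : SemiDecreasingOn u (Ioo a b))
    (hB : ∀ m, ∀ s ∈ Ioo a b, |u m s| ≤ B) (hD : Dense D)
    (hcauchy : ∀ q ∈ Ioo a b ∩ D, CauchySeq (u · q)) {δ : ℝ} (hδ : 0 < δ) :
    ∃ W : ℝ → ℝ, Antitone W ∧ ∀ s ∈ Ioo a b, ContinuousAt W s →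
      ∃ lo hi, hi - lo ≤ 7 * δ ∧ ∀ᶠ m in atTop, u m s ∈ Icc lo hi := by
  obtain ⟨τ, hτ, N, hN⟩ := hu δ hδ
  set c := δ / τ
  set L : ℝ → ℝ := fun q => limUnder atTop (u · q)
  have hψ : ∀ᶠ m in atTop, AlmostAntitoneOn (fun x => u m x - c * x) (Ioo a b) δ :=
    eventually_atTop.2 ⟨N, fun m hm => almostAntitoneOn_sub_mul_of_local ordConnected_Ioo hδ.le hτ
      fun x hx y hy hyx hxy => hN x hx y hy hyx hxy m hm⟩
  have hlim : ∀ q ∈ Ioo a b ∩ D, Tendsto (fun m => u m q - c * q) atTop (𝓝 (L q - c * q)) :=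
    fun q hq => (hcauchy q hq).tendsto_limUnder.sub_const _
  have hφ : AlmostAntitoneOn (fun q => L q - c * q) (Ioo a b ∩ D) δ :=
    AlmostAntitoneOn.of_tendsto (hψ.mono fun _ hm => hm.mono inter_subset_left) hlim
  have hφB : ∀ q ∈ Ioo a b ∩ D, |L q - c * q| ≤ B + c * max |a| |b| := by
    intro q hq
    have hLq : |L q| ≤ B := le_of_tendsto (hcauchy q hq).tendsto_limUnder.abs
      (Eventually.of_forall fun m => hB m q hq.1)
    have hq_le : |q| ≤ max |a| |b| := abs_le_max_abs_abs hq.1.1.le hq.1.2.le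
    calc |L q - c * q| ≤ |L q| + |c * q| := abs_sub _ _
      _ = |L q| + c * |q| := by rw [abs_mul, abs_of_pos (div_pos hδ hτ)]
      _ ≤ B + c * max |a| |b| := by gcongr
  obtain ⟨W, hWanti, hW⟩ := hφ.exists_antitone hφB
  refine ⟨W, hWanti, fun s hs hWs => ?_⟩
  obtain ⟨lo, hi, hlen, hev⟩ :=
    exists_eventually_mem_Icc_of_continuousAt hδ hψ hD hlim hW (Ioo_mem_nhds hs.1 hs.2) hWs
  refine ⟨lo + c * s, hi + c * s, by linarith, hev.mono fun m hm => ?_⟩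
  exact ⟨by linarith [hm.1], by linarith [hm.2]⟩

theorem SemiDecreasingOn.countable_setOf_not_cauchySeq (hu : SemiDecreasingOn u (Ioo a b))
    (hB : ∀ m, ∀ s ∈ Ioo a b, |u m s| ≤ B) (hD : Dense D)
    (hcauchy : ∀ q ∈ Ioo a b ∩ D, CauchySeq (u · q)) :
    {s ∈ Ioo a b | ¬CauchySeq (u · s)}.Countable := by
  choose W hWanti hW using fun k : ℕ =>
    hu.exists_antitone_bracket hB hD hcauchy (Nat.one_div_pos_of_nat (n := k))
  refine (countable_iUnion fun k => (hWanti k).countable_not_continuousAt).mono ?_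
  rintro s ⟨hs, hnot⟩
  by_contra hcont
  simp only [mem_iUnion, mem_ofPred_eq, not_exists, not_not] at hcont
  refine hnot (cauchySeq_of_forall_eventually_mem_Icc fun ε hε => ?_)
  obtain ⟨k, hk⟩ := exists_nat_one_div_lt (div_pos hε (by norm_num : (0 : ℝ) < 7))
  obtain ⟨lo, hi, hlen, hev⟩ := hW k s hs (hcont k)
  exact ⟨lo, hi, by linarith [(lt_div_iff₀' (by norm_num : (0 : ℝ) < 7)).1 hk], hev⟩

end Bracket

theorem exists_strictMono_forall_tendsto {Y : Type*} [Countable Y] (u : ℕ → Y → ℝ)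
    (hB : ∀ y, ∃ B, ∀ m, |u m y| ≤ B) :
    ∃ φ : ℕ → ℕ, StrictMono φ ∧ ∀ y, ∃ L, Tendsto (fun m => u (φ m) y) atTop (𝓝 L) := by
  choose B hB using hB
  have hK : IsCompact (univ.pi fun y => Icc (-B y) (B y)) :=
    isCompact_univ_pi fun _ => isCompact_Icc
  obtain ⟨G, -, φ, hφ, hconv⟩ := hK.tendsto_subseq fun m y _ => abs_le.1 (hB y m)
  exact ⟨φ, hφ, fun y => ⟨G y, tendsto_pi_nhds.1 hconv y⟩⟩

theorem stmt4 {I : Type*} [Countable I] (a b : ℝ)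
    (f : I → ℕ → ℝ → ℝ)
    (hbd : ∀ i, ∃ B, ∀ m, ∀ s ∈ Set.Ioo a b, |f i m s| ≤ B)
    (hsd : ∀ i, ∀ δ > (0 : ℝ), ∃ τ > (0 : ℝ), ∃ mi : ℕ,
      ∀ s₁ ∈ Set.Ioo a b, ∀ s₂ ∈ Set.Ioo a b,
        s₂ - τ ≤ s₁ → s₁ ≤ s₂ → ∀ m ≥ mi, f i m s₂ ≤ f i m s₁ + δ) :
    ∃ σ : ℕ → ℕ, StrictMono σ ∧ ∃ g : I → ℝ → ℝ,
      ∀ s ∈ Set.Ioo a b, ∀ i,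
        Filter.Tendsto (fun m => f i (σ m) s) Filter.atTop (nhds (g i s)) := by
  choose B hB using hbd
  set D := range ((↑) : ℚ → ℝ)
  have : Countable ↥(Ioo a b ∩ D) := ((countable_range _).mono inter_subset_right).to_subtype
  obtain ⟨σ₁, hσ₁, hlim₁⟩ := exists_strictMono_forall_tendsto (Y := I × ↥(Ioo a b ∩ D))
    (fun m y => f y.1 m y.2) fun y => ⟨B y.1, fun m => hB y.1 m _ y.2.2.1⟩
  set E : I → Set ℝ := fun i => {s ∈ Ioo a b | ¬CauchySeq fun m => f i (σ₁ m) s}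
  have hE : ∀ i, (E i).Countable := fun i =>
    (SemiDecreasingOn.comp_strictMono (hsd i) hσ₁).countable_setOf_not_cauchySeq
      (fun m => hB i (σ₁ m)) Rat.denseRange_cast
      fun q hq => (hlim₁ (i, ⟨q, hq⟩)).elim fun _ h => h.cauchySeq
  have : ∀ i, Countable (E i) := fun i => (hE i).to_subtype
  obtain ⟨σ₂, hσ₂, hlim₂⟩ := exists_strictMono_forall_tendsto (Y := Σ i, E i)
    (fun m y => f y.1 (σ₁ m) y.2) fun y => ⟨B y.1, fun m => hB y.1 _ _ y.2.2.1⟩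
  refine ⟨σ₁ ∘ σ₂, hσ₁.comp hσ₂, fun i s => limUnder atTop fun m => f i (σ₁ (σ₂ m)) s,
    fun s hs i => tendsto_nhds_limUnder ?_⟩
  by_cases hsE : s ∈ E i
  · exact hlim₂ ⟨i, s, hsE⟩
  · have hcauchy : CauchySeq fun m => f i (σ₁ m) s := not_not.1 fun h => hsE ⟨hs, h⟩
    exact cauchySeq_tendsto_of_complete (hcauchy.comp_tendsto hσ₂.tendsto_atTop)
end

section
/- Let v : ℝ^d × (0,∞) → ℂ be a bounded smooth solution of ∂_t v - Δv = v(1-|v|^2) with limsup_{t→0^+} ‖v(t)‖_{L^∞} ≤ M. Then for all t > 0 and x ∈ ℝ^d, |v(x,t)| ≤ max(1, M), and moreover |v(x,t)|^2 ≤ 1 + y_0(t) where y_0(t) = e^{-t/2}/(1-e^{-t/2}); in particular |v(x,t)| ≤ 2 for t ≥ 1. -/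
set_option maxHeartbeats 1000000
open Set Filter

noncomputable def lapC {d : ℕ} (f : EuclideanSpace ℝ (Fin d) → ℂ)
    (x : EuclideanSpace ℝ (Fin d)) : ℂ :=
  ∑ i, fderiv ℝ (fun y => fderiv ℝ f y (EuclideanSpace.single i 1)) x
    (EuclideanSpace.single i 1)

private lemma deriv_nonneg_of_max {g : ℝ → ℝ} {g' a b t : ℝ} (hg : HasDerivAt g g' t)
    (hat : a < t) (htb : t ≤ b) (hmax : ∀ s ∈ Set.Icc a b, g s ≤ g t) : 0 ≤ g' := by
  have hslope : Tendsto (slope g t) (nhdsWithin t (Iio t)) (nhds g') :=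
    (hasDerivAt_iff_tendsto_slope.1 hg).mono_left
      (nhdsWithin_mono _ (fun s hs => ne_of_lt hs))
  refine ge_of_tendsto hslope ?_
  filter_upwards [Ioo_mem_nhdsLT_of_mem (show t ∈ Ioc a t from ⟨hat, le_rfl⟩)] with s hs
  have h1 : g s ≤ g t := hmax s ⟨hs.1.le, hs.2.le.trans htb⟩
  have h2 : s - t < 0 := by linarith [hs.2]
  rw [slope_def_field]
  rw [div_nonneg_iff]
  right
  constructor <;> linarith

private lemma second_deriv_nonpos_of_max {g g1 : ℝ → ℝ} {g2 : ℝ}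
    (hg : ∀ s, HasDerivAt g (g1 s) s) (hg1 : HasDerivAt g1 g2 0)
    (hmax : ∀ s, g s ≤ g 0) : g2 ≤ 0 := by
  by_contra hcon
  push_neg at hcon
  have h0 : g1 0 = 0 := by
    have hl : IsLocalMax g 0 := Filter.Eventually.of_forall hmax
    have := hl.deriv_eq_zero
    rwa [(hg 0).deriv] at this
  have hs : Tendsto (fun s => g1 s / s) (nhdsWithin 0 (Ioi 0)) (nhds g2) := by
    have h1 := (hasDerivAt_iff_tendsto_slope.1 hg1).mono_left
      (nhdsWithin_mono _ (fun s (hs : s ∈ Ioi 0) => ne_of_gt hs))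
    refine h1.congr (fun s => ?_)
    rw [slope_def_field, h0, sub_zero, sub_zero]
  have hpos : ∀ᶠ s in nhdsWithin 0 (Ioi 0), 0 < g1 s / s := hs.eventually (eventually_gt_nhds hcon)
  obtain ⟨u, hu, hsub⟩ := mem_nhdsGT_iff_exists_Ioo_subset.1 hpos
  have hu0 : 0 < u := hu
  have hmono : StrictMonoOn g (Icc 0 u) := by
    apply strictMonoOn_of_deriv_pos (convex_Icc 0 u)
    · exact fun s _ => (hg s).continuousAt.continuousWithinAt
    · intro s hs
      rw [interior_Icc] at hs
      rw [(hg s).deriv]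
      have hq := hsub hs
      have : 0 < g1 s / s := hq
      have hs0 : 0 < s := hs.1
      by_contra hng
      push_neg at hng
      nlinarith [div_nonpos_of_nonpos_of_nonneg hng hs0.le]
  have := hmono (left_mem_Icc.2 hu0.le) (right_mem_Icc.2 hu0.le) hu0
  linarith [hmax u]

private lemma line_second_deriv {d : ℕ} (f : EuclideanSpace ℝ (Fin d) → ℂ)
    (hf : ContDiff ℝ (⊤ : ℕ∞) f) (x : EuclideanSpace ℝ (Fin d)) (i : Fin d) :
    ∃ g1 : ℝ → ℝ,
      (∀ s : ℝ, HasDerivAt (fun s : ℝ => ‖f (x + s • EuclideanSpace.single i (1:ℝ))‖ ^ 2) (g1 s) s) ∧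
      HasDerivAt g1 (2 * ‖fderiv ℝ f x (EuclideanSpace.single i 1)‖ ^ 2
        + 2 * ((starRingEnd ℂ) (f x) *
          fderiv ℝ (fun y => fderiv ℝ f y (EuclideanSpace.single i 1)) x
            (EuclideanSpace.single i 1)).re) 0 := by
  set e : EuclideanSpace ℝ (Fin d) := EuclideanSpace.single i (1:ℝ) with he
  have hfd : Differentiable ℝ f := hf.differentiable (by simp)
  set G : EuclideanSpace ℝ (Fin d) → ℂ := fun y => fderiv ℝ f y e with hG
  have hGd : Differentiable ℝ G := by
    have h1 : ContDiff ℝ 1 (fderiv ℝ f) := hf.fderiv_right (WithTop.coe_le_coe.2 le_top)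
    exact (ContinuousLinearMap.apply ℝ ℂ e).differentiable.comp (h1.differentiable (by simp))
  set L : ℝ → EuclideanSpace ℝ (Fin d) := fun s => x + s • e with hLdef
  have hL : ∀ s, HasDerivAt L e s := by
    intro s
    have := ((hasDerivAt_id s).smul_const e).const_add x
    simpa [hLdef] using this
  have hL0 : L 0 = x := by simp [hLdef]
  refine ⟨fun s => 2 * (inner ℝ (f (L s)) (G (L s)) : ℝ), ?_, ?_⟩
  · intro s
    have h1 : HasFDerivAt (fun y => ‖f y‖ ^ 2)
        (2 • (innerSL ℝ (f (L s))).comp (fderiv ℝ f (L s))) (L s) :=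
      (hfd (L s)).hasFDerivAt.norm_sq
    have h2 := h1.comp_hasDerivAt s (hL s)
    refine h2.congr_deriv ?_
    simp only [ContinuousLinearMap.smul_apply, ContinuousLinearMap.comp_apply, innerSL_apply_apply,
      smul_eq_mul]
    rw [two_nsmul]
    ring
  · -- second derivative
    have hfx : HasFDerivAt f (fderiv ℝ f x) x := (hfd x).hasFDerivAt
    have hGx : HasFDerivAt G (fderiv ℝ G x) x := (hGd x).hasFDerivAt
    have hinner : HasFDerivAt (fun y => (inner ℝ (f y) (G y) : ℝ))
        ((fderivInnerCLM ℝ (f x, G x)).comp ((fderiv ℝ f x).prod (fderiv ℝ G x))) x :=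
      hfx.inner ℝ hGx
    rw [show x = L 0 from hL0.symm] at hinner
    have h3 := hinner.comp_hasDerivAt 0 (hL 0)
    rw [hL0] at h3
    have h4 := h3.const_mul 2
    refine h4.congr_deriv ?_
    have hq : ((fderivInnerCLM ℝ (f x, G x)).comp ((fderiv ℝ f x).prod (fderiv ℝ G x)))
        e = (inner ℝ (f x) (fderiv ℝ G x e) : ℝ) + (inner ℝ (fderiv ℝ f x e) (G x) : ℝ) := by
      simp [fderivInnerCLM_apply]
    rw [hq]
    have hGval : G x = fderiv ℝ f x e := rfl
    have h5 : (inner ℝ (fderiv ℝ f x e) (G x) : ℝ) = ‖fderiv ℝ f x e‖ ^ 2 := by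
      rw [hGval]; exact real_inner_self_eq_norm_sq _
    have h6 : (inner ℝ (f x) (fderiv ℝ G x e) : ℝ)
        = ((starRingEnd ℂ) (f x) * fderiv ℝ (fun y => fderiv ℝ f y e) x e).re := by
      rw [Complex.inner, mul_comm]
    rw [h5, h6]
    ring

private lemma comparison {d : ℕ} (v : ℝ → EuclideanSpace ℝ (Fin d) → ℂ)
    (hsmooth : ContDiff ℝ (⊤ : ℕ∞) (Function.uncurry v))
    (B : ℝ) (hbd : ∀ t x, ‖v t x‖ ≤ B)
    (hpde : ∀ t, 0 < t → ∀ x,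
      deriv (fun s => v s x) t - lapC (v t) x = v t x * (1 - (‖v t x‖ : ℂ) ^ 2))
    (t₁ t₂ : ℝ) (ht₁ : 0 < t₁) (h12 : t₁ < t₂)
    (Y Y' : ℝ → ℝ) (hY : ∀ s ∈ Set.Icc t₁ t₂, HasDerivAt Y (Y' s) s)
    (hY0 : ∀ s ∈ Set.Icc t₁ t₂, 0 ≤ Y s)
    (hY' : ∀ s ∈ Set.Icc t₁ t₂, -2 * Y s * (1 + Y s) ≤ Y' s)
    (hI : ∀ x, ‖v t₁ x‖ ^ 2 - 1 ≤ Y t₁) :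
    ∀ x, ‖v t₂ x‖ ^ 2 - 1 ≤ Y t₂ := by
  intro x₀
  have hB0 : 0 ≤ B := le_trans (norm_nonneg _) (hbd 0 0)
  suffices key : ∀ ε > (0:ℝ), ∀ t ∈ Set.Icc t₁ t₂, ∀ x : EuclideanSpace ℝ (Fin d),
      (‖v t x‖^2 - 1) - Y t - ε * (1 + ‖x‖^2 + (2*d+1)*(t - t₁)) < 0 by
    refine le_of_forall_pos_le_add ?_
    intro δ hδ
    have hC : (0:ℝ) < 1 + ‖x₀‖^2 + (2*d+1)*(t₂ - t₁) := by
      have h1 : (0:ℝ) ≤ ‖x₀‖^2 := sq_nonneg _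
      have h2 : (0:ℝ) ≤ (2*d+1)*(t₂-t₁) :=
        mul_nonneg (by positivity) (by linarith)
      linarith
    set C : ℝ := 1 + ‖x₀‖^2 + (2*d+1)*(t₂ - t₁) with hCdef
    have h3 := key (δ / C) (by positivity) t₂ ⟨h12.le, le_rfl⟩ x₀
    have h4 : δ / C * C = δ := div_mul_cancel₀ δ (ne_of_gt hC)
    nlinarith
  intro ε hε
  by_contra hcon
  push_neg at hcon
  obtain ⟨tb, htb, xb, hwb⟩ := hcon
  set w : ℝ → EuclideanSpace ℝ (Fin d) → ℝ :=
    fun t x => (‖v t x‖^2 - 1) - Y t - ε * (1 + ‖x‖^2 + (2*d+1)*(t - t₁)) with hwdef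
  -- basic differentiability facts
  have hdiff : Differentiable ℝ (Function.uncurry v) := hsmooth.differentiable (by simp)
  have htime : ∀ (t : ℝ) (x : EuclideanSpace ℝ (Fin d)), HasDerivAt (fun s => v s x) (deriv (fun s => v s x) t) t := by
    intro t x
    have h1 : DifferentiableAt ℝ (fun s : ℝ => v s x) t := by
      exact (hdiff (t, x)).comp t ((differentiableAt_id.prodMk (differentiableAt_const x) : DifferentiableAt ℝ (fun s : ℝ => (s, x)) t))
    exact h1.hasDerivAt
  have hut : ∀ (t : ℝ) (x : EuclideanSpace ℝ (Fin d)), HasDerivAt (fun s => ‖v s x‖^2)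
      (2 * ((starRingEnd ℂ) (v t x) * deriv (fun s => v s x) t).re) t := by
    intro t x
    have h1 := (htime t x).norm_sq
    rwa [Complex.inner, mul_comm (deriv (fun s => v s x) t)] at h1
  have hvt : ∀ t : ℝ, ContDiff ℝ (⊤ : ℕ∞) (v t) := by
    intro t
    exact hsmooth.comp (((contDiff_const (c := t)).prodMk contDiff_id))
  -- far-field negativity
  set R : ℝ := ‖xb‖ + 1 + B^2/ε with hRdef
  have hdiv : ε * (B^2/ε) = B^2 := mul_div_cancel₀ _ (ne_of_gt hε)
  have hfar : ∀ t ∈ Set.Icc t₁ t₂, ∀ x : EuclideanSpace ℝ (Fin d), R ≤ ‖x‖ → w t x < 0 := by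
    intro t ht x hx
    have h1 : ‖v t x‖^2 ≤ B^2 := by
      have := hbd t x
      nlinarith [norm_nonneg (v t x)]
    have hx1 : 1 + B^2/ε ≤ ‖x‖ := by
      have : (0:ℝ) ≤ ‖xb‖ := norm_nonneg _
      simp only [hRdef] at hx; linarith
    have h2 : B^2 ≤ ε * ‖x‖^2 := by
      have hd : (0:ℝ) ≤ B^2/ε := by positivity
      have h6 : (1 + B^2/ε)*(1 + B^2/ε) ≤ ‖x‖*‖x‖ :=
        mul_le_mul hx1 hx1 (by positivity) (norm_nonneg x)
      have h7 : ε * ((1 + B^2/ε)*(1 + B^2/ε)) ≤ ε * (‖x‖*‖x‖) :=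
        mul_le_mul_of_nonneg_left h6 hε.le
      have h8 : 0 ≤ ε * ((B^2/ε) * (B^2/ε)) := by positivity
      nlinarith
    have h3 : 0 ≤ Y t := hY0 t ht
    have h4 : (0:ℝ) ≤ (2*d+1)*(t - t₁) := by
      have h5 : (0:ℝ) ≤ t - t₁ := by linarith [ht.1]
      exact mul_nonneg (by positivity) h5
    simp only [hwdef]
    nlinarith
  -- compact max
  have hxbR : xb ∈ Metric.closedBall (0:EuclideanSpace ℝ (Fin d)) R := by
    rw [Metric.mem_closedBall, dist_zero_right]
    have : (0:ℝ) ≤ B^2/ε := by positivity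
    simp only [hRdef]; linarith
  have hK : IsCompact ((Set.Icc t₁ t₂) ×ˢ (Metric.closedBall (0:EuclideanSpace ℝ (Fin d)) R)) :=
    isCompact_Icc.prod (isCompact_closedBall 0 R)
  have hWc : ContinuousOn (fun p : ℝ × EuclideanSpace ℝ (Fin d) => w p.1 p.2)
      ((Set.Icc t₁ t₂) ×ˢ (Metric.closedBall (0:EuclideanSpace ℝ (Fin d)) R)) := by
    have hu : Continuous (fun p : ℝ × EuclideanSpace ℝ (Fin d) => ‖v p.1 p.2‖^2 - 1) := by
      exact ((hsmooth.continuous.norm).pow 2).sub continuous_const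
    have hYc : ContinuousOn (fun p : ℝ × EuclideanSpace ℝ (Fin d) => Y p.1)
        ((Set.Icc t₁ t₂) ×ˢ (Metric.closedBall (0:EuclideanSpace ℝ (Fin d)) R)) := by
      have hYc0 : ContinuousOn Y (Set.Icc t₁ t₂) :=
        fun s hs => (hY s hs).continuousAt.continuousWithinAt
      exact hYc0.comp continuous_fst.continuousOn (fun p hp => hp.1)
    have hrest : Continuous (fun p : ℝ × EuclideanSpace ℝ (Fin d) =>
        ε * (1 + ‖p.2‖^2 + (2*d+1)*(p.1 - t₁))) := by fun_prop
    exact (hu.continuousOn.sub hYc).sub hrest.continuousOn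
  obtain ⟨p, hpK, hpmax⟩ := hK.exists_isMaxOn ⟨(tb, xb), ⟨htb, hxbR⟩⟩ hWc
  rw [isMaxOn_iff] at hpmax
  have h0 : 0 ≤ w p.1 p.2 := le_trans hwb (hpmax (tb, xb) ⟨htb, hxbR⟩)
  have hpI : p.1 ∈ Set.Icc t₁ t₂ := hpK.1
  have hpt1 : t₁ < p.1 := by
    rcases lt_or_eq_of_le hpI.1 with h | h
    · exact h
    · exfalso
      have h1 := hI p.2
      have h2 : (0:ℝ) ≤ ‖p.2‖^2 := sq_nonneg _
      have h3 : w p.1 p.2 = (‖v t₁ p.2‖^2 - 1) - Y t₁ - ε * (1 + ‖p.2‖^2) := by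
        simp only [hwdef, ← h]; ring_nf
      nlinarith
  have hglobx : ∀ y : EuclideanSpace ℝ (Fin d), w p.1 y ≤ w p.1 p.2 := by
    intro y
    by_cases hy : ‖y‖ ≤ R
    · exact hpmax (p.1, y) ⟨hpI, by rwa [Metric.mem_closedBall, dist_zero_right]⟩
    · push_neg at hy
      exact le_trans (hfar p.1 hpI y hy.le).le h0
  have hglobt : ∀ s ∈ Set.Icc t₁ t₂, w s p.2 ≤ w p.1 p.2 :=
    fun s hs => hpmax (s, p.2) ⟨hs, hpK.2⟩
  -- time derivative inequality
  set dU : ℝ := 2 * ((starRingEnd ℂ) (v p.1 p.2) * deriv (fun s => v s p.2) p.1).re with hdU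
  have htd : 0 ≤ dU - Y' p.1 - ε * (2*d+1) := by
    have hg : HasDerivAt (fun s => w s p.2) (dU - Y' p.1 - ε * (2*d+1)) p.1 := by
      have h1 := ((hut p.1 p.2).sub_const 1).sub (hY p.1 hpI)
      have h2 : HasDerivAt (fun s : ℝ => ε * (1 + ‖p.2‖^2 + (2*d+1)*(s - t₁)))
          (ε * (2*d+1)) p.1 := by
        have h3 : HasDerivAt (fun s : ℝ => (2*(d:ℝ)+1)*(s - t₁)) (2*d+1) p.1 := by
          simpa using (((hasDerivAt_id p.1).sub_const t₁).const_mul ((2*(d:ℝ)+1)))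
        have h4 := (h3.const_add (1 + ‖p.2‖^2)).const_mul ε
        simpa using h4
      have h5 := h1.sub h2
      exact h5
    exact deriv_nonneg_of_max hg hpt1 hpI.2 hglobt
  -- spatial second derivative inequality, summed
  set f : EuclideanSpace ℝ (Fin d) → ℂ := v p.1 with hf
  have hfP : ContDiff ℝ (⊤ : ℕ∞) f := hvt p.1
  have hsp : ∀ i : Fin d,
      2 * ‖fderiv ℝ f p.2 (EuclideanSpace.single i 1)‖ ^ 2
        + 2 * ((starRingEnd ℂ) (f p.2) *
          fderiv ℝ (fun y => fderiv ℝ f y (EuclideanSpace.single i 1)) p.2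
            (EuclideanSpace.single i 1)).re ≤ ε * 2 := by
    intro i
    obtain ⟨g1, hg1, hg2⟩ := line_second_deriv f hfP p.2 i
    set e : EuclideanSpace ℝ (Fin d) := EuclideanSpace.single i (1:ℝ) with he
    set L : ℝ → EuclideanSpace ℝ (Fin d) := fun s : ℝ => p.2 + s • e with hLdef
    have hL : ∀ s, HasDerivAt L e s := by
      intro s
      have := ((hasDerivAt_id s).smul_const e).const_add p.2
      simpa [hLdef] using this
    have hL0 : L 0 = p.2 := by simp [hLdef]
    have hq1 : ∀ s, HasDerivAt (fun s => ‖L s‖^2) (2 * (inner ℝ (L s) e : ℝ)) s :=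
      fun s => (hL s).norm_sq
    have hq2 : HasDerivAt (fun s => 2 * (inner ℝ (L s) e : ℝ)) 2 0 := by
      have h1 : HasDerivAt (fun s => (inner ℝ (L s) e : ℝ))
          ((inner ℝ (L 0) (0:EuclideanSpace ℝ (Fin d)) : ℝ) + (inner ℝ e e : ℝ)) 0 :=
        (hL 0).inner ℝ (hasDerivAt_const 0 e)
      have h2 : ((inner ℝ (L 0) (0:EuclideanSpace ℝ (Fin d)) : ℝ) + (inner ℝ e e : ℝ)) = 1 := by
        rw [inner_zero_right, real_inner_self_eq_norm_sq, he]
        rw [EuclideanSpace.norm_single]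
        norm_num
      rw [h2] at h1
      have h3 := h1.const_mul 2
      norm_num at h3
      exact h3
    have hGw : ∀ s, HasDerivAt (fun s => w p.1 (L s))
        (g1 s - ε * (2 * (inner ℝ (L s) e : ℝ))) s := by
      intro s
      have hin : HasDerivAt (fun s : ℝ => ε * (1 + ‖L s‖^2 + (2*d+1)*(p.1 - t₁)))
          (ε * (2 * (inner ℝ (L s) e : ℝ))) s :=
        (((hq1 s).const_add 1).add_const ((2*d+1)*(p.1 - t₁))).const_mul ε
      exact (((hg1 s).sub_const 1).sub_const (Y p.1)).sub hin
    have hG2 : HasDerivAt (fun s => g1 s - ε * (2 * (inner ℝ (L s) e : ℝ)))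
        ((2 * ‖fderiv ℝ f p.2 (EuclideanSpace.single i 1)‖ ^ 2
          + 2 * ((starRingEnd ℂ) (f p.2) *
            fderiv ℝ (fun y => fderiv ℝ f y (EuclideanSpace.single i 1)) p.2
              (EuclideanSpace.single i 1)).re) - ε * 2) 0 :=
      hg2.sub (hq2.const_mul ε)
    have hmaxline : ∀ s : ℝ, (fun s => w p.1 (L s)) s ≤ (fun s => w p.1 (L s)) 0 := by
      intro s
      simp only [hL0]
      exact hglobx (L s)
    have := second_deriv_nonpos_of_max hGw hG2 hmaxline
    linarith
  have hlaple : 2 * ((starRingEnd ℂ) (f p.2) * lapC f p.2).re ≤ ε * 2 * d := by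
    have hsum := Finset.sum_le_sum (fun i (_ : i ∈ Finset.univ) => hsp i)
    rw [Finset.sum_add_distrib, Finset.sum_const] at hsum
    simp only [Finset.card_univ, Fintype.card_fin, nsmul_eq_mul] at hsum
    have hre : ∑ i : Fin d, 2 * ((starRingEnd ℂ) (f p.2) *
        fderiv ℝ (fun y => fderiv ℝ f y (EuclideanSpace.single i 1)) p.2
          (EuclideanSpace.single i 1)).re
        = 2 * ((starRingEnd ℂ) (f p.2) * lapC f p.2).re := by
      rw [lapC, Finset.mul_sum, Complex.re_sum, Finset.mul_sum]
    rw [hre] at hsum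
    have hnn : (0:ℝ) ≤ ∑ i : Fin d, 2 * ‖fderiv ℝ f p.2 (EuclideanSpace.single i 1)‖ ^ 2 :=
      Finset.sum_nonneg (fun i _ => by positivity)
    nlinarith
  -- use the PDE
  have hV := hpde p.1 (ht₁.trans hpt1) p.2
  have hderiv_eq : deriv (fun s => v s p.2) p.1
      = lapC f p.2 + f p.2 * (1 - (‖f p.2‖ : ℂ)^2) := by
    rw [← hV]; ring
  have hdU2 : dU = 2 * ((starRingEnd ℂ) (f p.2) * lapC f p.2).re
      + 2 * (‖f p.2‖^2 * (1 - ‖f p.2‖^2)) := by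
    rw [hdU, hderiv_eq, mul_add, Complex.add_re, mul_add]
    congr 1
    have h8 : (starRingEnd ℂ) (f p.2) * (f p.2 * (1 - (‖f p.2‖ : ℂ)^2))
        = ((‖f p.2‖^2 * (1 - ‖f p.2‖^2) : ℝ) : ℂ) := by
      have hcm : (starRingEnd ℂ) (f p.2) * f p.2 = ((‖f p.2‖^2 : ℝ) : ℂ) := by
        rw [mul_comm, Complex.mul_conj, Complex.normSq_eq_norm_sq]
      rw [← mul_assoc, hcm]
      push_cast
      ring
    rw [h8, Complex.ofReal_re]
  -- final contradiction
  have hY'p := hY' p.1 hpI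
  have hY0p := hY0 p.1 hpI
  have hσY : Y p.1 ≤ ‖f p.2‖^2 - 1 := by
    have hC2 : (0:ℝ) ≤ (2*d+1)*(p.1 - t₁) :=
      mul_nonneg (by positivity) (by linarith)
    have h2 : (0:ℝ) ≤ ‖p.2‖^2 := sq_nonneg _
    have h0' : 0 ≤ ‖f p.2‖^2 - 1 - Y p.1 - ε * (1 + ‖p.2‖^2 + (2*(d:ℝ)+1)*(p.1 - t₁)) := h0
    nlinarith
  have hprod : (0:ℝ) ≤ ((‖f p.2‖^2 - 1) - Y p.1) * ((‖f p.2‖^2 - 1) + Y p.1 + 1) := by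
    apply mul_nonneg
    · linarith
    · nlinarith
  have e1 : Y' p.1 + ε ≤ 2 * (‖f p.2‖^2 * (1 - ‖f p.2‖^2)) := by
    rw [hdU2] at htd
    linarith
  nlinarith [e1, hY'p, hprod, hY0p, hσY, hε]

theorem stmt12 {d : ℕ} (v : ℝ → EuclideanSpace ℝ (Fin d) → ℂ)
    (hsmooth : ContDiff ℝ (⊤ : ℕ∞) (Function.uncurry v))
    (B : ℝ) (hbd : ∀ t x, ‖v t x‖ ≤ B)
    (hpde : ∀ t, 0 < t → ∀ x,
      deriv (fun s => v s x) t - lapC (v t) x = v t x * (1 - (‖v t x‖ : ℂ) ^ 2))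
    (M : ℝ) (hM : 0 < M)
    (hinit : ∀ ε > (0 : ℝ), ∃ t₀ > (0 : ℝ), ∀ t, 0 < t → t < t₀ → ∀ x, ‖v t x‖ ≤ M + ε) :
    (∀ t, 0 < t → ∀ x, ‖v t x‖ ≤ max 1 M ∧
      ‖v t x‖ ^ 2 ≤ 1 + Real.exp (-t / 2) / (1 - Real.exp (-t / 2))) ∧
    (∀ t, 1 ≤ t → ∀ x, ‖v t x‖ ≤ 2) := by
  have hB0 : 0 ≤ B := le_trans (norm_nonneg _) (hbd 0 0)
  -- Part 1 : the max(1,M) bound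
  have part1 : ∀ t, 0 < t → ∀ x, ‖v t x‖ ≤ max 1 M := by
    intro t ht x
    have hsq : ‖v t x‖^2 ≤ max 1 (M^2) := by
      refine le_of_forall_pos_le_add ?_
      intro δ hδ
      set ε : ℝ := min 1 (δ/(2*M+1)) with hεdef
      have hεpos : 0 < ε := lt_min one_pos (by positivity)
      obtain ⟨t₀, ht₀, hnear⟩ := hinit ε hεpos
      set t₁ : ℝ := min (t₀/2) (t/2) with ht₁def
      have ht₁pos : 0 < t₁ := lt_min (by linarith) (by linarith)
      have ht₁t : t₁ < t := lt_of_le_of_lt (min_le_right _ _) (by linarith)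
      have ht₁t₀ : t₁ < t₀ := lt_of_le_of_lt (min_le_left _ _) (by linarith)
      have hc0 : (0:ℝ) ≤ max 1 ((M+ε)^2) - 1 := by
        have := le_max_left (1:ℝ) ((M+ε)^2); linarith
      have hcomp := comparison v hsmooth B hbd hpde t₁ t ht₁pos ht₁t
        (fun _ => max 1 ((M+ε)^2) - 1) (fun _ => 0)
        (fun s _ => hasDerivAt_const s _) (fun s _ => hc0)
        (fun s _ => by
          show -2 * (max 1 ((M+ε)^2) - 1) * (1 + (max 1 ((M+ε)^2) - 1)) ≤ (0:ℝ)
          nlinarith [hc0]) ?_ x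
      · have h1 : max 1 ((M+ε)^2) ≤ max 1 (M^2) + δ := by
          have hε1 : ε ≤ 1 := min_le_left _ _
          have hε2 : ε ≤ δ/(2*M+1) := min_le_right _ _
          have hε3 : ε * (2*M+1) ≤ δ := by
            rw [le_div_iff₀ (by linarith : (0:ℝ) < 2*M+1)] at hε2
            linarith
          have h2 : (M+ε)^2 ≤ M^2 + δ := by nlinarith
          have h3 : (1:ℝ) ≤ max 1 (M^2) + δ :=
            le_trans (le_max_left _ _) (by linarith)
          exact max_le h3 (le_trans h2 (by
            have := le_max_right (1:ℝ) (M^2); linarith))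
        linarith
      · intro y
        have h4 : ‖v t₁ y‖ ≤ M + ε := hnear t₁ ht₁pos ht₁t₀ y
        have h5 : ‖v t₁ y‖^2 ≤ (M+ε)^2 :=
          pow_le_pow_left₀ (norm_nonneg _) h4 2
        have h6 := le_max_right (1:ℝ) ((M+ε)^2)
        show ‖v t₁ y‖^2 - 1 ≤ max 1 ((M+ε)^2) - 1
        linarith
    have hmx : (0:ℝ) ≤ max 1 M := le_trans zero_le_one (le_max_left _ _)
    have hsq2 : (max 1 M)^2 = max 1 (M^2) := by
      rcases le_total M 1 with h | h
      · rw [max_eq_left h, max_eq_left (by nlinarith), one_pow]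
      · rw [max_eq_right h, max_eq_right (by nlinarith)]
    nlinarith [norm_nonneg (v t x)]
  -- Part 2 : the explicit supersolution bound
  have part2 : ∀ t, 0 < t → ∀ x,
      ‖v t x‖ ^ 2 ≤ 1 + Real.exp (-t / 2) / (1 - Real.exp (-t / 2)) := by
    intro t ht x
    set F : ℝ → ℝ := fun s => Real.exp (-s/2) / (1 - Real.exp (-s/2)) with hFdef
    show ‖v t x‖ ^ 2 ≤ 1 + F t
    refine le_of_forall_pos_le_add ?_
    intro δ hδ
    set B' : ℝ := B + 1 with hB'def
    have hB'pos : 0 < B' := by linarith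
    set c₀ : ℝ := 4 * Real.log ((1 + B'^2)/B'^2) with hc₀def
    have hc₀pos : 0 < c₀ := by
      have h1 : 1 < (1 + B'^2)/B'^2 := by
        rw [lt_div_iff₀ (by positivity)]; nlinarith
      have := Real.log_pos h1
      simp only [hc₀def]; linarith
    have hFc : ContinuousAt F t := by
      have hden : (0:ℝ) < 1 - Real.exp (-t/2) := by
        have h1 : Real.exp (-t/2) < 1 := by
          rw [Real.exp_lt_one_iff]; linarith
        linarith
      apply ContinuousAt.div
      · exact (Real.continuous_exp.comp (by continuity)).continuousAt
      · exact (continuous_const.sub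
          (Real.continuous_exp.comp (by continuity))).continuousAt
      · exact ne_of_gt hden
    have htend : Filter.Tendsto (fun a : ℝ => F (t - a/2))
        (nhdsWithin 0 (Set.Ioi 0)) (nhds (F t)) := by
      have h1 : Filter.Tendsto (fun a : ℝ => t - a/2) (nhds 0) (nhds t) := by
        have h2 : Continuous (fun a : ℝ => t - a/2) := by continuity
        have h3 := h2.tendsto (0:ℝ)
        simpa using h3
      exact hFc.tendsto.comp (h1.mono_left nhdsWithin_le_nhds)
    have hev1 : ∀ᶠ a in nhdsWithin 0 (Set.Ioi 0), F (t - a/2) < F t + δ :=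
      htend.eventually (eventually_lt_nhds (by linarith))
    have hev2 : Set.Ioo (0:ℝ) (min t c₀) ∈ nhdsWithin (0:ℝ) (Set.Ioi 0) :=
      Ioo_mem_nhdsGT_of_mem ⟨le_rfl, lt_min ht hc₀pos⟩
    obtain ⟨a, haF, ha⟩ := (hev1.and hev2).exists
    have ha0 : 0 < a := ha.1
    have hat : a < t := lt_of_lt_of_le ha.2 (min_le_left _ _)
    have hac : a ≤ c₀ := (lt_of_lt_of_le ha.2 (min_le_right _ _)).le
    -- the supersolution
    set Y : ℝ → ℝ := fun s => F (s - a/2) with hYdef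
    set Y' : ℝ → ℝ := fun s =>
      -Real.exp (-(s - a/2)/2) / (2*(1 - Real.exp (-(s - a/2)/2))^2) with hY'def
    have hND : ∀ s ∈ Set.Icc a t, 0 < Real.exp (-(s - a/2)/2) ∧
        Real.exp (-(s - a/2)/2) < 1 := by
      intro s hs
      refine ⟨Real.exp_pos _, ?_⟩
      rw [Real.exp_lt_one_iff]
      have := hs.1
      linarith
    have hYd : ∀ s ∈ Set.Icc a t, HasDerivAt Y (Y' s) s := by
      intro s hs
      obtain ⟨hN, hN1⟩ := hND s hs
      set N : ℝ := Real.exp (-(s - a/2)/2) with hNdef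
      have hD : (0:ℝ) < 1 - N := by linarith
      have hg : HasDerivAt (fun s : ℝ => -(s - a/2)/2) (-1/2) s := by
        simpa using (((hasDerivAt_id s).sub_const (a/2)).neg.div_const 2)
      have hnum : HasDerivAt (fun s : ℝ => Real.exp (-(s - a/2)/2))
          (Real.exp (-(s - a/2)/2) * (-1/2)) s := hg.exp
      have hden : HasDerivAt (fun s : ℝ => 1 - Real.exp (-(s - a/2)/2))
          (-(Real.exp (-(s - a/2)/2) * (-1/2))) s := hnum.const_sub 1
      have hdiv := hnum.div hden (by rw [← hNdef]; exact ne_of_gt hD)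
      refine hdiv.congr_deriv ?_
      simp only [hY'def, ← hNdef]
      field_simp
      ring
    have hY0 : ∀ s ∈ Set.Icc a t, 0 ≤ Y s := by
      intro s hs
      obtain ⟨hN, hN1⟩ := hND s hs
      have he1 : Y s = Real.exp (-(s - a/2)/2) / (1 - Real.exp (-(s - a/2)/2)) := rfl
      rw [he1]
      exact div_nonneg hN.le (by linarith)
    have hY' : ∀ s ∈ Set.Icc a t, -2 * Y s * (1 + Y s) ≤ Y' s := by
      intro s hs
      obtain ⟨hN, hN1⟩ := hND s hs
      set N : ℝ := Real.exp (-(s - a/2)/2) with hNdef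
      have hD : (0:ℝ) < 1 - N := by linarith
      have he1 : Y s = N / (1 - N) := rfl
      have he2 : Y' s = -N / (2*(1 - N)^2) := rfl
      rw [he1, he2]
      have hEq : -2 * (N/(1-N)) * (1 + N/(1-N)) = (-2*N)/((1-N)^2) := by
        field_simp
        ring
      rw [hEq, div_le_div_iff₀ (by positivity) (by positivity)]
      nlinarith [sq_nonneg (1-N)]
    -- initial comparison at time a
    have hIc : ∀ y, ‖v a y‖^2 - 1 ≤ Y a := by
      intro y
      set z : ℝ := Real.exp (-(a - a/2)/2) with hzdef
      have hz1 : 0 < z := Real.exp_pos _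
      have hz2 : z < 1 := by
        rw [hzdef, Real.exp_lt_one_iff]; linarith
      have hzq : B'^2/(1+B'^2) ≤ z := by
        have hc₀eq : c₀ = 4*(Real.log (1+B'^2) - Real.log (B'^2)) := by
          rw [hc₀def, Real.log_div (by positivity) (by positivity)]
        have hlog : Real.log (B'^2/(1+B'^2))
            = Real.log (B'^2) - Real.log (1+B'^2) :=
          Real.log_div (by positivity) (by positivity)
        have h2 : Real.log (B'^2/(1+B'^2)) ≤ -(a - a/2)/2 := by
          rw [hlog]; rw [hc₀eq] at hac; linarith
        calc B'^2/(1+B'^2) = Real.exp (Real.log (B'^2/(1+B'^2))) :=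
              (Real.exp_log (by positivity)).symm
          _ ≤ z := Real.exp_le_exp.2 h2
      have hYa : B'^2 ≤ Y a := by
        have he : Y a = z/(1-z) := rfl
        rw [he, le_div_iff₀ (by linarith)]
        have h3 : B'^2/(1+B'^2)*(1+B'^2) ≤ z*(1+B'^2) :=
          mul_le_mul_of_nonneg_right hzq (by positivity)
        rw [div_mul_cancel₀ _ (by positivity : (0:ℝ) < 1+B'^2).ne'] at h3
        nlinarith
      have h4 : ‖v a y‖^2 ≤ B^2 := pow_le_pow_left₀ (norm_nonneg _) (hbd a y) 2
      have h5 : B^2 ≤ B'^2 := by rw [hB'def]; nlinarith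
      linarith
    have hcomp := comparison v hsmooth B hbd hpde a t ha0 hat Y Y' hYd hY0 hY' hIc x
    have hYt : Y t = F (t - a/2) := rfl
    rw [hYt] at hcomp
    linarith
  -- assemble
  refine ⟨fun t ht x => ⟨part1 t ht x, part2 t ht x⟩, ?_⟩
  intro t ht x
  have h2 := part2 t (by linarith) x
  have ha : Real.exp (-t/2) ≤ Real.exp (-(1:ℝ)/2) := Real.exp_le_exp.2 (by linarith)
  have hc : Real.exp (-(1:ℝ)/2) ≤ 2/3 := by
    have h1 : (3:ℝ)/2 ≤ Real.exp (1/2) := by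
      have := Real.add_one_le_exp (1/2 : ℝ); linarith
    have h3 : Real.exp (-(1:ℝ)/2) = 1 / Real.exp ((1:ℝ)/2) := by
      rw [one_div, ← Real.exp_neg]; norm_num
    rw [h3, div_le_div_iff₀ (Real.exp_pos _) (by norm_num)]
    linarith
  have hposd : (1:ℝ)/3 ≤ 1 - Real.exp (-t/2) := by linarith
  have hF2 : Real.exp (-t/2) / (1 - Real.exp (-t/2)) ≤ 2 := by
    have h6 := div_le_div₀ (by norm_num : (0:ℝ) ≤ 2/3)
      (by linarith : Real.exp (-t/2) ≤ 2/3) (by norm_num : (0:ℝ) < 1/3) hposd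
    norm_num at h6
    linarith
  nlinarith [norm_nonneg (v t x), sq_nonneg (‖v t x‖ - 2)]
end
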